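/- Let H be a bialgebra over a field K of characteristic zero that is connected as a coalgebra, and let I ⊆ H be a coideal with I ≠ (0). Then I contains a nonzero primitive element of H. -/

import Mathlib

/-!
Choose `y ≠ 0` in `I` for which the first `n` with `Δ̃⁽ⁿ⁾ y = 0` is as small as possible; since
`Δ̃⁽⁰⁾` is the identity on `I ⊆ ker ε`, that index is `k + 1`, and `Δ̃⁽ᵏ⁾` is injective on `I`.
Coassociativity of `Δ̃` gives `Δ̃⁽ᵏ⁺¹⁾ = (id ⊗ Δ̃⁽ᵏ⁾) ∘ Δ̃ = (Δ̃⁽ᵏ⁾ ⊗ id) ∘ Δ̃` up to reassociation,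
so `u = Δ̃ y` is killed by `Δ̃⁽ᵏ⁾` applied to either factor, and `u ∈ I ⊗ H + H ⊗ I` because `I` is a
coideal. Over a field the first fact puts `u` in `ker Δ̃⁽ᵏ⁾ ⊗ ker Δ̃⁽ᵏ⁾`, which maps injectively to
`H/I ⊗ H/I`, while the second says that `u` maps to `0` there. Hence `Δ̃ y = 0`: `y` is primitive.
-/

open TensorProduct


open TensorProduct

universe u v

/-- A bundled `K`-module, used to form iterated tensor powers. -/
structure ModPack (K : Type u) [CommSemiring K] : Type (max u (v + 1)) where
  carrier : Type v
  [acg : AddCommGroup carrier]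
  [mod : Module K carrier]

attribute [instance] ModPack.acg ModPack.mod

/-- `tpk K H n` is the `(n+1)`-fold tensor power `H ⊗ (H ⊗ (⋯ ⊗ H))`. -/
noncomputable def tpk (K : Type u) [CommSemiring K]
    (H : Type v) [AddCommGroup H] [Module K H] : ℕ → ModPack.{u, v} K
  | 0 => ⟨H⟩
  | n + 1 => ⟨H ⊗[K] (tpk K H n).carrier⟩

/-- The reduced coproduct `Δ̃(x) = Δ(x) - 1 ⊗ x - x ⊗ 1 + ε(x) (1 ⊗ 1)`
(the unique linear map with `Δ̃(1) = 0` and `Δ̃(x) = Δ(x) - 1 ⊗ x - x ⊗ 1` on `ker ε`). -/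
noncomputable def redComul (K : Type u) [CommSemiring K]
    (H : Type v) [Ring H] [Bialgebra K H] : H →ₗ[K] H ⊗[K] H :=
  Coalgebra.comul
    - TensorProduct.mk K H H 1
    - (TensorProduct.mk K H H).flip 1
    + (Coalgebra.counit (R := K)).smulRight ((1 : H) ⊗ₜ[K] (1 : H))

/-- Applying `Δ̃` to the first tensor factor: `Δ̃ ⊗ id^{⊗ n}`. -/
noncomputable def frontMap (K : Type u) [CommSemiring K]
    (H : Type v) [Ring H] [Bialgebra K H] :
    (n : ℕ) → (tpk K H n).carrier →ₗ[K] (tpk K H (n + 1)).carrier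
  | 0 => redComul K H
  | n + 1 =>
      (TensorProduct.assoc K H H (tpk K H n).carrier).toLinearMap
        ∘ₗ TensorProduct.map (redComul K H) LinearMap.id

/-- The iterated reduced coproducts: `Δ̃⁽⁰⁾ = ρ` (with `ρ(x) = x - ε(x)1`), `Δ̃⁽¹⁾ = Δ̃`,
and `Δ̃⁽ᵏ⁺¹⁾ = (Δ̃ ⊗ id^{⊗ k}) ∘ Δ̃⁽ᵏ⁾`. -/
noncomputable def redIter (K : Type u) [CommSemiring K]
    (H : Type v) [Ring H] [Bialgebra K H] :
    (n : ℕ) → H →ₗ[K] (tpk K H n).carrier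
  | 0 => LinearMap.id - (Coalgebra.counit (R := K)).smulRight (1 : H)
  | 1 => redComul K H
  | n + 2 => frontMap K H (n + 1) ∘ₗ redIter K H (n + 1)

/-- `x` is a primitive element of the bialgebra `H`: `Δ(x) = x ⊗ 1 + 1 ⊗ x`. -/
def IsPrimitive (K : Type*) {H : Type*} [CommSemiring K] [Ring H] [Bialgebra K H] (x : H) : Prop :=
  Coalgebra.comul (R := K) x = x ⊗ₜ[K] (1 : H) + (1 : H) ⊗ₜ[K] x

section TensorKernels

variable {K V W M N : Type*} [Field K] [AddCommGroup V] [Module K V] [AddCommGroup W]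
  [Module K W] [AddCommGroup M] [Module K M] [AddCommGroup N] [Module K N]

lemma Submodule.injective_mkQ_comp_subtype_of_disjoint {p q : Submodule K V} (h : Disjoint p q) :
    Function.Injective (p.mkQ ∘ₗ q.subtype) := by
  rw [← LinearMap.ker_eq_bot, LinearMap.ker_comp, Submodule.ker_mkQ,
    ← Submodule.disjoint_iff_comap_eq_bot]
  exact h.symm

namespace TensorProduct

lemma mem_range_map_subtype_ker (f : V →ₗ[K] M) (g : W →ₗ[K] N) {u : V ⊗[K] W}
    (hf : f.rTensor W u = 0) (hg : g.lTensor V u = 0) :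
    u ∈ LinearMap.range (TensorProduct.map (LinearMap.ker f).subtype (LinearMap.ker g).subtype) := by
  obtain ⟨w, rfl⟩ :=
    (Module.Flat.rTensor_exact W (LinearMap.exact_subtype_ker_map f) u).mp hf
  have hgw : g.lTensor (LinearMap.ker f) w = 0 := by
    apply Module.Flat.rTensor_preserves_injective_linearMap _ (LinearMap.ker f).injective_subtype
    rw [← LinearMap.comp_apply, LinearMap.rTensor_comp_lTensor, ← LinearMap.lTensor_comp_rTensor,
      LinearMap.comp_apply, hg, map_zero]
  obtain ⟨v, rfl⟩ :=
    (Module.Flat.lTensor_exact _ (LinearMap.exact_subtype_ker_map g) w).mp hgw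
  exact ⟨v, by rw [← LinearMap.rTensor_comp_lTensor, LinearMap.comp_apply]⟩

lemma map_mkQ_mkQ_eq_zero {I : Submodule K V} {J : Submodule K W} {u : V ⊗[K] W}
    (hu : u ∈ LinearMap.range (TensorProduct.map I.subtype LinearMap.id)
      ⊔ LinearMap.range (TensorProduct.map LinearMap.id J.subtype)) :
    TensorProduct.map I.mkQ J.mkQ u = 0 := by
  have hI : I.mkQ ∘ₗ I.subtype = 0 := by ext; simp
  have hJ : J.mkQ ∘ₗ J.subtype = 0 := by ext; simp
  obtain ⟨_, ⟨a, rfl⟩, _, ⟨b, rfl⟩, rfl⟩ := Submodule.mem_sup.mp hu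
  simp only [map_add, ← LinearMap.comp_apply, ← TensorProduct.map_comp, hI, hJ,
    TensorProduct.map_zero_left, TensorProduct.map_zero_right, LinearMap.zero_apply, add_zero]

lemma eq_zero_of_rTensor_eq_zero_of_lTensor_eq_zero (f : V →ₗ[K] M) (g : W →ₗ[K] N)
    {I : Submodule K V} {J : Submodule K W} (hIf : Disjoint I (LinearMap.ker f))
    (hJg : Disjoint J (LinearMap.ker g)) {u : V ⊗[K] W}
    (hu : u ∈ LinearMap.range (TensorProduct.map I.subtype LinearMap.id)
      ⊔ LinearMap.range (TensorProduct.map LinearMap.id J.subtype))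
    (hf : f.rTensor W u = 0) (hg : g.lTensor V u = 0) : u = 0 := by
  obtain ⟨v, rfl⟩ := mem_range_map_subtype_ker f g hf hg
  have hinj := map_injective_of_flat_flat _ _
    (Submodule.injective_mkQ_comp_subtype_of_disjoint hIf)
    (Submodule.injective_mkQ_comp_subtype_of_disjoint hJg)
  have hv : v = 0 := hinj <| by
    rw [map_zero, TensorProduct.map_comp, LinearMap.comp_apply, map_mkQ_mkQ_eq_zero hu]
  rw [hv, map_zero]

end TensorProduct

end TensorKernels

open Coalgebra

section TensorPowers

variable (K : Type u) [CommSemiring K] (H : Type v) [AddCommGroup H] [Module K H]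

noncomputable def tpkSplitLast :
    (n : ℕ) → (tpk K H (n + 1)).carrier →ₗ[K] (tpk K H n).carrier ⊗[K] H
  | 0 => LinearMap.id
  | n + 1 => (TensorProduct.assoc K H (tpk K H n).carrier H).symm.toLinearMap
      ∘ₗ (tpkSplitLast n).lTensor H

end TensorPowers

section ReducedCoproduct

variable (K : Type u) [CommRing K] (H : Type v) [Ring H] [Bialgebra K H]

-- Definitionally `redIter K H 0`, but with codomain `H` instead of `(tpk K H 0).carrier`.
noncomputable def augProj : H →ₗ[K] H :=
  LinearMap.id - (counit (R := K)).smulRight (1 : H)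

variable {K H}

lemma augProj_apply (x : H) : augProj K H x = x - counit (R := K) x • 1 := rfl

lemma augProj_one : augProj K H 1 = 0 := by
  simp [augProj_apply, Bialgebra.counit_one]

lemma augProj_comp_augProj : augProj K H ∘ₗ augProj K H = augProj K H := by
  ext x
  simp [augProj_apply, Bialgebra.counit_one]

lemma redComul_apply (x : H) : redComul K H x
    = comul (R := K) x - 1 ⊗ₜ x - x ⊗ₜ 1 + counit (R := K) x • (1 ⊗ₜ 1) := rfl

lemma counit_smulRight_one :
    (counit (R := K) (A := H)).smulRight (1 : H) = LinearMap.toSpanSingleton K H 1 ∘ₗ counit :=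
  LinearMap.ext fun _ => rfl

lemma rTensor_augProj_comul (x : H) :
    (augProj K H).rTensor H (comul (R := K) x) = comul (R := K) x - 1 ⊗ₜ x := by
  rw [augProj, LinearMap.rTensor_sub, LinearMap.rTensor_id, counit_smulRight_one,
    LinearMap.rTensor_comp, LinearMap.sub_apply, LinearMap.comp_apply, rTensor_counit_comul]
  simp

lemma lTensor_augProj_comul (x : H) :
    (augProj K H).lTensor H (comul (R := K) x) = comul (R := K) x - x ⊗ₜ 1 := by
  rw [augProj, LinearMap.lTensor_sub, LinearMap.lTensor_id, counit_smulRight_one,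
    LinearMap.lTensor_comp, LinearMap.sub_apply, LinearMap.comp_apply, lTensor_counit_comul]
  simp

lemma map_augProj_comul (x : H) :
    TensorProduct.map (augProj K H) (augProj K H) (comul (R := K) x) = redComul K H x := by
  rw [← LinearMap.lTensor_comp_rTensor, LinearMap.comp_apply, rTensor_augProj_comul, map_sub,
    lTensor_augProj_comul, LinearMap.lTensor_tmul, augProj_apply, redComul_apply, tmul_sub,
    tmul_smul]
  abel

lemma redComul_eq_map_augProj_comp_comul :
    redComul K H = TensorProduct.map (augProj K H) (augProj K H) ∘ₗ comul (R := K) :=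
  LinearMap.ext fun x => (map_augProj_comul x).symm

lemma redComul_one : redComul K H 1 = 0 := by
  rw [← map_augProj_comul, Bialgebra.comul_one, Algebra.TensorProduct.one_def,
    TensorProduct.map_tmul, augProj_one, TensorProduct.zero_tmul]

lemma redComul_comp_augProj : redComul K H ∘ₗ augProj K H = redComul K H := by
  ext x
  rw [LinearMap.comp_apply, augProj_apply, map_sub, map_smul, redComul_one, smul_zero, sub_zero]

lemma lTensor_augProj_redComul (x : H) :
    (augProj K H).lTensor H (redComul K H x) = redComul K H x := by
  rw [← map_augProj_comul, ← LinearMap.comp_apply, LinearMap.lTensor_comp_map,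
    augProj_comp_augProj]

lemma rTensor_augProj_redComul (x : H) :
    (augProj K H).rTensor H (redComul K H x) = redComul K H x := by
  rw [← map_augProj_comul, ← LinearMap.comp_apply, LinearMap.rTensor_comp_map,
    augProj_comp_augProj]

lemma rTensor_redComul_redComul (x : H) :
    (redComul K H).rTensor H (redComul K H x) = TensorProduct.map
      (TensorProduct.map (augProj K H) (augProj K H)) (augProj K H)
      ((comul (R := K)).rTensor H (comul (R := K) x)) := by
  rw [← map_augProj_comul, ← LinearMap.comp_apply, LinearMap.rTensor_comp_map,
    redComul_comp_augProj, redComul_eq_map_augProj_comp_comul, ← LinearMap.map_comp_rTensor]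
  rfl

lemma lTensor_redComul_redComul (x : H) :
    (redComul K H).lTensor H (redComul K H x) = TensorProduct.map
      (augProj K H) (TensorProduct.map (augProj K H) (augProj K H))
      ((comul (R := K)).lTensor H (comul (R := K) x)) := by
  rw [← map_augProj_comul, ← LinearMap.comp_apply, LinearMap.lTensor_comp_map,
    redComul_comp_augProj, redComul_eq_map_augProj_comp_comul, ← LinearMap.map_comp_lTensor]
  rfl

lemma redComul_coassoc_apply (x : H) :
    TensorProduct.assoc K H H H ((redComul K H).rTensor H (redComul K H x))
      = (redComul K H).lTensor H (redComul K H x) := by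
  rw [rTensor_redComul_redComul, lTensor_redComul_redComul, ← TensorProduct.map_map_assoc,
    coassoc_apply]

lemma redIter_succ_apply (n : ℕ) (x : H) :
    redIter K H (n + 1) x = (redIter K H n).lTensor H (redComul K H x) := by
  induction n generalizing x with
  | zero => exact (lTensor_augProj_redComul x).symm
  | succ n ih =>
    change TensorProduct.assoc K H H _ ((redComul K H).rTensor _ (redIter K H (n + 1) x)) = _
    rw [ih, ← LinearMap.comp_apply (LinearMap.rTensor _ _), LinearMap.rTensor_comp_lTensor,
      ← LinearMap.lTensor_comp_rTensor, LinearMap.comp_apply, LinearMap.lTensor_tensor]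
    simp only [LinearMap.comp_apply, LinearEquiv.coe_coe, LinearEquiv.apply_symm_apply,
      redComul_coassoc_apply, ← LinearMap.lTensor_comp_apply]
    congr 2
    exact LinearMap.ext fun y => (ih y).symm

lemma tpkSplitLast_redIter_succ_apply (n : ℕ) (x : H) :
    tpkSplitLast K H n (redIter K H (n + 1) x) = (redIter K H n).rTensor H (redComul K H x) := by
  induction n generalizing x with
  | zero => exact (rTensor_augProj_redComul x).symm
  | succ n ih =>
    have hcomp : tpkSplitLast K H n ∘ₗ redIter K H (n + 1)
        = (redIter K H n).rTensor H ∘ₗ redComul K H := LinearMap.ext ih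
    change (TensorProduct.assoc K H _ H).symm
      ((tpkSplitLast K H n).lTensor H (redIter K H (n + 2) x)) = _
    rw [redIter_succ_apply, ← LinearMap.lTensor_comp_apply, hcomp, LinearMap.lTensor_comp_apply,
      ← redComul_coassoc_apply]
    have hassoc (y : (H ⊗[K] H) ⊗[K] H) : (TensorProduct.assoc K H _ H).symm
        ((redIter K H n).rTensor H |>.lTensor H (TensorProduct.assoc K H H H y))
          = ((redIter K H n).lTensor H).rTensor H y := by
      simpa using (LinearMap.congr_fun
        (LinearMap.rTensor_lTensor_comp_assoc_symm (P := H) (Q := H) (x := redIter K H n))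
        (TensorProduct.assoc K H H H y)).symm
    have hsucc : (redIter K H n).lTensor H ∘ₗ redComul K H = redIter K H (n + 1) :=
      LinearMap.ext fun y => (redIter_succ_apply n y).symm
    rw [hassoc, ← LinearMap.rTensor_comp_apply, hsucc]
    rfl

lemma redIter_zero_apply_of_counit_eq_zero {x : H} (hx : counit (R := K) x = 0) :
    redIter K H 0 x = x := by
  change x - counit (R := K) x • 1 = x
  rw [hx, zero_smul, sub_zero]

lemma redComul_apply_of_counit_eq_zero {x : H} (hx : counit (R := K) x = 0) :
    redComul K H x = comul (R := K) x - 1 ⊗ₜ x - x ⊗ₜ 1 := by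
  rw [redComul_apply, hx, zero_smul, add_zero]

lemma isPrimitive_iff_redComul_eq_zero {x : H} (hx : counit (R := K) x = 0) :
    IsPrimitive K x ↔ redComul K H x = 0 := by
  rw [redComul_apply_of_counit_eq_zero hx, sub_sub, sub_eq_zero, add_comm]
  rfl

lemma redComul_mem_of_comul_mem {I : Submodule K H} {x : H} (hxI : x ∈ I)
    (hx : counit (R := K) x = 0)
    (hcomul : comul (R := K) x ∈ LinearMap.range (TensorProduct.map I.subtype LinearMap.id)
      ⊔ LinearMap.range (TensorProduct.map LinearMap.id I.subtype)) :
    redComul K H x ∈ LinearMap.range (TensorProduct.map I.subtype LinearMap.id)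
      ⊔ LinearMap.range (TensorProduct.map LinearMap.id I.subtype) := by
  rw [redComul_apply_of_counit_eq_zero hx]
  refine Submodule.sub_mem _ (Submodule.sub_mem _ hcomul ?_) ?_
  · exact Submodule.mem_sup_right ⟨1 ⊗ₜ ⟨x, hxI⟩, rfl⟩
  · exact Submodule.mem_sup_left ⟨⟨x, hxI⟩ ⊗ₜ 1, rfl⟩

end ReducedCoproduct

theorem statement14_general {K : Type*} [Field K]
    {H : Type*} [Ring H] [Bialgebra K H]
    (hconn : ∀ x : H, ∃ n : ℕ, redIter K H n x = 0)
    (I : Submodule K H)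
    (hcounit : ∀ x ∈ I, Coalgebra.counit (R := K) x = 0)
    (hcomul : ∀ x ∈ I, Coalgebra.comul (R := K) x ∈
      LinearMap.range (TensorProduct.map I.subtype (LinearMap.id : H →ₗ[K] H))
        ⊔ LinearMap.range (TensorProduct.map (LinearMap.id : H →ₗ[K] H) I.subtype))
    (hI : I ≠ ⊥) :
    ∃ x ∈ I, x ≠ 0 ∧ IsPrimitive K x := by
  classical
  have hex : ∃ n, ∃ y ∈ I, y ≠ 0 ∧ redIter K H n y = 0 := by
    obtain ⟨x, hxI, hx0⟩ := (Submodule.ne_bot_iff I).mp hI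
    exact ⟨_, x, hxI, hx0, (hconn x).choose_spec⟩
  obtain ⟨y, hyI, hy0, hy⟩ := Nat.find_spec hex
  obtain ⟨n, hn⟩ : ∃ n, Nat.find hex = n + 1 := Nat.exists_eq_succ_of_ne_zero fun h0 => hy0 <| by
    rwa [h0, redIter_zero_apply_of_counit_eq_zero (hcounit y hyI)] at hy
  rw [hn] at hy
  have hdisj : Disjoint I (LinearMap.ker (redIter K H n)) :=
    Submodule.disjoint_def.mpr fun z hzI hz => by_contra fun hz0 =>
      Nat.find_min hex (by omega) ⟨z, hzI, hz0, hz⟩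
  refine ⟨y, hyI, hy0, (isPrimitive_iff_redComul_eq_zero (hcounit y hyI)).mpr ?_⟩
  refine TensorProduct.eq_zero_of_rTensor_eq_zero_of_lTensor_eq_zero _ _ hdisj hdisj
    (redComul_mem_of_comul_mem hyI (hcounit y hyI) (hcomul y hyI)) ?_ ?_
  · rw [← tpkSplitLast_redIter_succ_apply, hy, map_zero]
  · exact (redIter_succ_apply n y).symm.trans hy

/-- In a bialgebra that is connected as a coalgebra, every nonzero coideal
contains a nonzero primitive element. -/
theorem statement14 {K : Type*} [Field K] [CharZero K]
    {H : Type*} [Ring H] [Bialgebra K H]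
    (hconn : ∀ x : H, ∃ n : ℕ, redIter K H n x = 0)
    (I : Submodule K H)
    (hcounit : ∀ x ∈ I, Coalgebra.counit (R := K) x = 0)
    (hcomul : ∀ x ∈ I, Coalgebra.comul (R := K) x ∈
      LinearMap.range (TensorProduct.map I.subtype (LinearMap.id : H →ₗ[K] H))
        ⊔ LinearMap.range (TensorProduct.map (LinearMap.id : H →ₗ[K] H) I.subtype))
    (hI : I ≠ ⊥) :
    ∃ x ∈ I, x ≠ 0 ∧ IsPrimitive K x :=
  statement14_general hconn I hcounit hcomul hI
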